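/- arXiv:2407.05624 — 4 statements merged into one kernel-verified Lean document; each statement's English description precedes it below -/
import Mathlib

section
/- In the state-space model of the previous context, if Φ is invertible and G₁ := Cov(W_t, W_{t-1}), G₀ := Cov(W_t), then Σ_ζ = −Φ⁻¹ G₁ and Σ_ξ = G₀ − Σ_ζ − Φ Σ_ζ Φᵀ. -/
open Matrix MeasureTheory

/-- Column-stacking vectorization. -/
def vecM {m n : ℕ} (M : Matrix (Fin m) (Fin n) ℝ) : Fin n × Fin m → ℝ :=
  fun p => M p.2 p.1

/-- Cross second-moment matrix `E[X Yᵀ]` of two (zero-mean) random vectors. -/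
noncomputable def covM {Ω : Type*} [MeasurableSpace Ω] (μ : Measure Ω)
    {ι κ : Type*} (X : Ω → ι → ℝ) (Y : Ω → κ → ℝ) : Matrix ι κ ℝ :=
  Matrix.of fun i j => ∫ ω, X ω i * Y ω j ∂μ

/-! Writing `W_s = vec F̃_s - Φ vec F̃_{s-1}`, the state `F` cancels:
`W_s = ξ_s + ζ_s - Φ ζ_{s-1}`. Expanding the covariances bilinearly, white noise and the
mutual uncorrelatedness of `ξ` and `ζ` leave the single term `Cov(W_t, W_{t-1}) = -Φ Σ_ζ`
and the three terms `Cov(W_t) = Σ_ξ + Σ_ζ + Φ Σ_ζ Φᵀ`. -/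

section CovarianceAlgebra

variable {Ω : Type*} [MeasurableSpace Ω] {μ : Measure Ω} {ι κ n : Type*}

theorem covM_transpose (X : Ω → ι → ℝ) (Y : Ω → κ → ℝ) :
    (covM μ X Y)ᵀ = covM μ Y X := by
  ext i j
  simp only [covM, transpose_apply, of_apply, mul_comm]

theorem memLp_mulVec [Fintype n] (A : Matrix ι n ℝ) {X : Ω → n → ℝ}
    (hX : ∀ k, MemLp (fun ω => X ω k) 2 μ) (i : ι) :
    MemLp (fun ω => (A *ᵥ X ω) i) 2 μ :=
  memLp_finsetSum Finset.univ fun k _ => (hX k).const_mul (A i k)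

theorem memLp_add_sub_mulVec [Fintype n] (A : Matrix ι n ℝ) {X X' : Ω → ι → ℝ}
    {X'' : Ω → n → ℝ} (hX : ∀ i, MemLp (fun ω => X ω i) 2 μ)
    (hX' : ∀ i, MemLp (fun ω => X' ω i) 2 μ) (hX'' : ∀ k, MemLp (fun ω => X'' ω k) 2 μ)
    (i : ι) :
    MemLp (fun ω => (X ω + X' ω - A *ᵥ X'' ω) i) 2 μ :=
  ((hX i).add (hX' i)).sub (memLp_mulVec A hX'' i)

theorem covM_add_sub_mulVec_left [Fintype n] (A : Matrix ι n ℝ) {X X' : Ω → ι → ℝ}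
    {X'' : Ω → n → ℝ} {Y : Ω → κ → ℝ} (hX : ∀ i, MemLp (fun ω => X ω i) 2 μ)
    (hX' : ∀ i, MemLp (fun ω => X' ω i) 2 μ) (hX'' : ∀ k, MemLp (fun ω => X'' ω k) 2 μ)
    (hY : ∀ j, MemLp (fun ω => Y ω j) 2 μ) :
    covM μ (fun ω => X ω + X' ω - A *ᵥ X'' ω) Y =
      covM μ X Y + covM μ X' Y - A * covM μ X'' Y := by
  ext i j
  simp only [covM, Matrix.sub_apply, Matrix.add_apply, Matrix.mul_apply, of_apply, Pi.add_apply,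
    Pi.sub_apply, mulVec, dotProduct, add_mul, sub_mul, Finset.sum_mul, mul_assoc]
  have hXY : Integrable (fun ω => X ω i * Y ω j) μ := (hX i).integrable_mul (hY j)
  have hX'Y : Integrable (fun ω => X' ω i * Y ω j) μ := (hX' i).integrable_mul (hY j)
  have hX''Y : ∀ k, Integrable (fun ω => A i k * (X'' ω k * Y ω j)) μ := fun k =>
    ((hX'' k).integrable_mul (hY j)).const_mul (A i k)
  have hsum : Integrable (fun ω => X ω i * Y ω j + X' ω i * Y ω j) μ := hXY.add hX'Y
  rw [integral_sub hsum (integrable_finsetSum Finset.univ fun k _ => hX''Y k),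
    integral_add hXY hX'Y, integral_finsetSum Finset.univ fun k _ => hX''Y k]
  simp only [integral_const_mul]

theorem covM_add_sub_mulVec_right [Fintype n] (A : Matrix κ n ℝ) {Y : Ω → ι → ℝ}
    {X X' : Ω → κ → ℝ} {X'' : Ω → n → ℝ} (hY : ∀ i, MemLp (fun ω => Y ω i) 2 μ)
    (hX : ∀ j, MemLp (fun ω => X ω j) 2 μ) (hX' : ∀ j, MemLp (fun ω => X' ω j) 2 μ)
    (hX'' : ∀ k, MemLp (fun ω => X'' ω k) 2 μ) :
    covM μ Y (fun ω => X ω + X' ω - A *ᵥ X'' ω) =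
      covM μ Y X + covM μ Y X' - covM μ Y X'' * Aᵀ := by
  rw [← covM_transpose, covM_add_sub_mulVec_left A hX hX' hX'' hY, transpose_sub,
    transpose_add, transpose_mul, covM_transpose, covM_transpose, covM_transpose]

end CovarianceAlgebra

theorem state_space_noise_cov_recovery_general {r₁ r₂ : ℕ}
    {Ω : Type*} [MeasurableSpace Ω] (μ : Measure Ω)
    (F Ftil ζ ξ : ℤ → Ω → Matrix (Fin r₁) (Fin r₂) ℝ)
    (Φ SigXi SigZeta : Matrix (Fin r₂ × Fin r₁) (Fin r₂ × Fin r₁) ℝ)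
    (hΦ : IsUnit Φ.det)
    (hL2ζ : ∀ t i, MemLp (fun ω => vecM (ζ t ω) i) 2 μ)
    (hL2ξ : ∀ t i, MemLp (fun ω => vecM (ξ t ω) i) 2 μ)
    (hobs : ∀ t ω, Ftil t ω = F t ω + ζ t ω)
    (hstate : ∀ t ω, vecM (F t ω) = Φ.mulVec (vecM (F (t - 1) ω)) + vecM (ξ t ω))
    (hζwhite : ∀ s t, s ≠ t →
      covM μ (fun ω => vecM (ζ s ω)) (fun ω => vecM (ζ t ω)) = 0)
    (hξwhite : ∀ s t, s ≠ t →
      covM μ (fun ω => vecM (ξ s ω)) (fun ω => vecM (ξ t ω)) = 0)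
    (hζξ : ∀ s t, covM μ (fun ω => vecM (ζ s ω)) (fun ω => vecM (ξ t ω)) = 0)
    (hξζ : ∀ s t, covM μ (fun ω => vecM (ξ s ω)) (fun ω => vecM (ζ t ω)) = 0)
    (hSigXi : ∀ t, covM μ (fun ω => vecM (ξ t ω)) (fun ω => vecM (ξ t ω)) = SigXi)
    (hSigZeta : ∀ t, covM μ (fun ω => vecM (ζ t ω)) (fun ω => vecM (ζ t ω)) = SigZeta) :
    ∀ t,
      SigZeta = -(Φ⁻¹ *
        covM μ (fun ω => vecM (Ftil t ω) - Φ.mulVec (vecM (Ftil (t - 1) ω)))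
               (fun ω => vecM (Ftil (t - 1) ω) - Φ.mulVec (vecM (Ftil (t - 2) ω))))
      ∧ SigXi =
        covM μ (fun ω => vecM (Ftil t ω) - Φ.mulVec (vecM (Ftil (t - 1) ω)))
               (fun ω => vecM (Ftil t ω) - Φ.mulVec (vecM (Ftil (t - 1) ω)))
          - SigZeta - Φ * SigZeta * Φᵀ := by
  intro t
  have hW : ∀ s ω, vecM (Ftil s ω) - Φ *ᵥ vecM (Ftil (s - 1) ω) =
      vecM (ξ s ω) + vecM (ζ s ω) - Φ *ᵥ vecM (ζ (s - 1) ω) := by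
    intro s ω
    have hvec : ∀ s, vecM (Ftil s ω) = vecM (F s ω) + vecM (ζ s ω) := fun s => by
      rw [hobs]; rfl
    rw [hvec, hvec, hstate s ω, mulVec_add]
    abel
  have hL2W : ∀ s, ∀ i, MemLp (fun ω => (vecM (ξ s ω) + vecM (ζ s ω) -
      Φ *ᵥ vecM (ζ (s - 1) ω)) i) 2 μ := fun s =>
    memLp_add_sub_mulVec Φ (hL2ξ s) (hL2ζ s) (hL2ζ (s - 1))
  rw [show t - 2 = t - 1 - 1 by ring]
  simp only [hW]
  rw [covM_add_sub_mulVec_left Φ (hL2ξ t) (hL2ζ t) (hL2ζ (t - 1)) (hL2W (t - 1)),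
    covM_add_sub_mulVec_left Φ (hL2ξ t) (hL2ζ t) (hL2ζ (t - 1)) (hL2W t)]
  simp only [covM_add_sub_mulVec_right Φ (hL2ξ _) (hL2ξ _) (hL2ζ _) (hL2ζ _),
    covM_add_sub_mulVec_right Φ (hL2ζ _) (hL2ξ _) (hL2ζ _) (hL2ζ _)]
  have hne₁ : t ≠ t - 1 := by omega
  have hne₂ : t ≠ t - 1 - 1 := by omega
  have hne₃ : t - 1 ≠ t - 1 - 1 := by omega
  simp only [hξζ, hζξ, hSigXi, hSigZeta, hξwhite _ _ hne₁, hζwhite _ _ hne₁,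
    hζwhite _ _ hne₁.symm, hζwhite _ _ hne₂, hζwhite _ _ hne₃]
  refine ⟨?_, ?_⟩
  · simp only [zero_mul, add_zero, zero_add, sub_zero, zero_sub, mul_neg, neg_neg]
    rw [← Matrix.mul_assoc, nonsing_inv_mul Φ hΦ, Matrix.one_mul]
  · noncomm_ring

/-- in the state-space model, with `Φ` invertible,
`G₁ = Cov(W_t, W_{t-1})` and `G₀ = Cov(W_t)` determine the noise covariances:
`Σ_ζ = −Φ⁻¹ G₁` and `Σ_ξ = G₀ − Σ_ζ − Φ Σ_ζ Φᵀ`. -/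
theorem state_space_noise_cov_recovery {r₁ r₂ : ℕ}
    {Ω : Type*} [MeasurableSpace Ω] (μ : Measure Ω) [IsProbabilityMeasure μ]
    (F Ftil ζ ξ : ℤ → Ω → Matrix (Fin r₁) (Fin r₂) ℝ)
    (Φ SigXi SigZeta : Matrix (Fin r₂ × Fin r₁) (Fin r₂ × Fin r₁) ℝ)
    (hΦ : IsUnit Φ.det)
    (hL2F : ∀ t i, MemLp (fun ω => vecM (F t ω) i) 2 μ)
    (hL2ζ : ∀ t i, MemLp (fun ω => vecM (ζ t ω) i) 2 μ)
    (hL2ξ : ∀ t i, MemLp (fun ω => vecM (ξ t ω) i) 2 μ)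
    (hmeanF : ∀ t i, ∫ ω, vecM (F t ω) i ∂μ = 0)
    (hmeanζ : ∀ t i, ∫ ω, vecM (ζ t ω) i ∂μ = 0)
    (hmeanξ : ∀ t i, ∫ ω, vecM (ξ t ω) i ∂μ = 0)
    (hobs : ∀ t ω, Ftil t ω = F t ω + ζ t ω)
    (hstate : ∀ t ω, vecM (F t ω) = Φ.mulVec (vecM (F (t - 1) ω)) + vecM (ξ t ω))
    (hζwhite : ∀ s t, s ≠ t →
      covM μ (fun ω => vecM (ζ s ω)) (fun ω => vecM (ζ t ω)) = 0)
    (hξwhite : ∀ s t, s ≠ t →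
      covM μ (fun ω => vecM (ξ s ω)) (fun ω => vecM (ξ t ω)) = 0)
    (hζξ : ∀ s t, covM μ (fun ω => vecM (ζ s ω)) (fun ω => vecM (ξ t ω)) = 0)
    (hξζ : ∀ s t, covM μ (fun ω => vecM (ξ s ω)) (fun ω => vecM (ζ t ω)) = 0)
    (hξF : ∀ t, covM μ (fun ω => vecM (ξ t ω)) (fun ω => vecM (F (t - 1) ω)) = 0)
    (hζF : ∀ t, covM μ (fun ω => vecM (ζ t ω)) (fun ω => vecM (F (t - 1) ω)) = 0)
    (hζF' : ∀ t, covM μ (fun ω => vecM (ζ (t - 1) ω)) (fun ω => vecM (F (t - 1) ω)) = 0)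
    (hSigXi : ∀ t, covM μ (fun ω => vecM (ξ t ω)) (fun ω => vecM (ξ t ω)) = SigXi)
    (hSigZeta : ∀ t, covM μ (fun ω => vecM (ζ t ω)) (fun ω => vecM (ζ t ω)) = SigZeta) :
    ∀ t,
      SigZeta = -(Φ⁻¹ *
        covM μ (fun ω => vecM (Ftil t ω) - Φ.mulVec (vecM (Ftil (t - 1) ω)))
               (fun ω => vecM (Ftil (t - 1) ω) - Φ.mulVec (vecM (Ftil (t - 2) ω))))
      ∧ SigXi =
        covM μ (fun ω => vecM (Ftil t ω) - Φ.mulVec (vecM (Ftil (t - 1) ω)))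
               (fun ω => vecM (Ftil t ω) - Φ.mulVec (vecM (Ftil (t - 1) ω)))
          - SigZeta - Φ * SigZeta * Φᵀ :=
  state_space_noise_cov_recovery_general μ F Ftil ζ ξ Φ SigXi SigZeta hΦ hL2ζ hL2ξ hobs hstate
    hζwhite hξwhite hζξ hξζ hSigXi hSigZeta
end

section
/- Let M be a symmetric real n×n matrix with eigenvalue decomposition M = Q D Qᵀ, Q orthogonal and D diagonal. Let D₊ be obtained from D by replacing each negative diagonal entry with zero. Then Q D₊ Qᵀ is positive semi-definite, symmetric, and among all positive semi-definite matrices it minimizes the Frobenius distance to M. -/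
/-! Conjugation by the orthogonal `Q` preserves the Frobenius norm, so it suffices to compare
`diagonal d` with `B = Qᵀ P Q`, which is again positive semi-definite. Dropping the off-diagonal
entries of `diagonal d - B` only decreases the norm, and since `B i i ≥ 0`,
`(d i - B i i)² ≥ (d i - max (d i) 0)²`. -/

open Matrix

/-- Squared Frobenius norm. -/
def frobSq {ι κ : Type*} [Fintype ι] [Fintype κ] (M : Matrix ι κ ℝ) : ℝ :=
  ∑ i, ∑ j, (M i j) ^ 2

section Frobenius

variable {ι κ : Type*} [Fintype ι] [Fintype κ]

lemma frobSq_eq_trace (A : Matrix ι κ ℝ) : frobSq A = (Aᵀ * A).trace := by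
  simp only [frobSq, trace, diag, mul_apply, transpose_apply, sq]
  exact Finset.sum_comm

lemma frobSq_transpose (A : Matrix ι κ ℝ) : frobSq Aᵀ = frobSq A :=
  Finset.sum_comm

lemma frobSq_mul_of_transpose_mul_self [DecidableEq ι] {μ : Type*} [Fintype μ]
    {Q : Matrix κ ι ℝ} (hQ : Qᵀ * Q = 1) (A : Matrix ι μ ℝ) : frobSq (Q * A) = frobSq A := by
  rw [frobSq_eq_trace, frobSq_eq_trace, transpose_mul, Matrix.mul_assoc,
    ← Matrix.mul_assoc Qᵀ, hQ, Matrix.one_mul]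

lemma frobSq_mul_mul_transpose [DecidableEq ι] {Q : Matrix κ ι ℝ} (hQ : Qᵀ * Q = 1) (A : Matrix ι ι ℝ) :
    frobSq (Q * A * Qᵀ) = frobSq A := by
  rw [← frobSq_transpose, transpose_mul, transpose_transpose, frobSq_mul_of_transpose_mul_self hQ,
    frobSq_transpose, frobSq_mul_of_transpose_mul_self hQ]

lemma sum_sq_diag_le_frobSq (A : Matrix ι ι ℝ) : ∑ i, A i i ^ 2 ≤ frobSq A :=
  Finset.sum_le_sum fun i _ =>
    Finset.single_le_sum (f := fun j => A i j ^ 2) (fun _ _ => sq_nonneg _) (Finset.mem_univ i)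

lemma frobSq_diagonal [DecidableEq ι] (v : ι → ℝ) : frobSq (diagonal v) = ∑ i, v i ^ 2 := by
  refine Finset.sum_congr rfl fun i _ => ?_
  rw [Finset.sum_eq_single i (fun j _ hj => by simp [diagonal_apply_ne _ hj.symm]) (by simp),
    diagonal_apply_eq]

end Frobenius

lemma sq_sub_max_zero_le {x y : ℝ} (hy : 0 ≤ y) : (x - max x 0) ^ 2 ≤ (x - y) ^ 2 := by
  rcases le_total 0 x with hx | hx
  · simp [max_eq_left hx, sq_nonneg]
  · rw [max_eq_right hx]
    nlinarith

lemma frobSq_diagonal_sub_posPart_le {ι : Type*} [Fintype ι] [DecidableEq ι] (d : ι → ℝ)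
    {B : Matrix ι ι ℝ} (hB : ∀ i, 0 ≤ B i i) :
    frobSq (diagonal d - diagonal fun i => max (d i) 0) ≤ frobSq (diagonal d - B) :=
  calc frobSq (diagonal d - diagonal fun i => max (d i) 0)
      = ∑ i, (d i - max (d i) 0) ^ 2 := by rw [diagonal_sub, frobSq_diagonal]
    _ ≤ ∑ i, (diagonal d - B) i i ^ 2 := Finset.sum_le_sum fun i _ => by
        simpa using sq_sub_max_zero_le (hB i)
    _ ≤ frobSq (diagonal d - B) := sum_sq_diag_le_frobSq _

/-- given a symmetric matrix `M = Q D Qᵀ` with `Q` orthogonal and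
`D` diagonal, replacing the negative diagonal entries of `D` by zero yields
`Q D₊ Qᵀ`, which is symmetric positive semi-definite and is the closest
positive semi-definite matrix to `M` in the Frobenius distance. -/
theorem psd_projection_eigen {n : ℕ}
    (M Q : Matrix (Fin n) (Fin n) ℝ) (d : Fin n → ℝ)
    (hQ : Q * Qᵀ = 1) (hQ' : Qᵀ * Q = 1)
    (hM : M = Q * Matrix.diagonal d * Qᵀ) :
    (Q * Matrix.diagonal (fun i => max (d i) 0) * Qᵀ).PosSemidef
    ∧ (Q * Matrix.diagonal (fun i => max (d i) 0) * Qᵀ)ᵀ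
        = Q * Matrix.diagonal (fun i => max (d i) 0) * Qᵀ
    ∧ ∀ P : Matrix (Fin n) (Fin n) ℝ, P.PosSemidef →
        frobSq (M - Q * Matrix.diagonal (fun i => max (d i) 0) * Qᵀ)
          ≤ frobSq (M - P) := by
  set Dp := diagonal fun i => max (d i) 0
  have hDp : Dp.PosSemidef := posSemidef_diagonal_iff.mpr fun i => le_max_right _ _
  refine ⟨by simpa using hDp.mul_mul_conjTranspose_same Q, by simp [Dp, Matrix.mul_assoc], ?_⟩
  intro P hP
  have hB : (Qᵀ * P * Q).PosSemidef := by simpa using hP.conjTranspose_mul_mul_same Q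
  have hQt : Qᵀᵀ * Qᵀ = 1 := by rwa [transpose_transpose]
  have hMconj : Qᵀ * M * Q = diagonal d := by
    rw [hM, ← Matrix.mul_assoc, ← Matrix.mul_assoc, hQ', Matrix.one_mul, Matrix.mul_assoc, hQ',
      Matrix.mul_one]
  calc frobSq (M - Q * Dp * Qᵀ) = frobSq (diagonal d - Dp) := by
        rw [hM, ← Matrix.sub_mul, ← Matrix.mul_sub, frobSq_mul_mul_transpose hQ']
    _ ≤ frobSq (diagonal d - Qᵀ * P * Q) :=
        frobSq_diagonal_sub_posPart_le d fun _ => hB.diag_nonneg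
    _ = frobSq (M - P) := by
        rw [← hMconj, ← Matrix.sub_mul, ← Matrix.mul_sub, ← frobSq_mul_mul_transpose hQt (M - P),
          transpose_transpose]
end

section
/- Let H ∈ ℝ^{n×n} be symmetric positive semi-definite with rank n−1, let γ₀ be a unit vector spanning ker(H), and let γ₁ be a vector orthogonal to γ₀. Set γ̄ = γ₀ + γ₁. Then H + γ̄ γ̄ᵀ is invertible and (H + γ̄ γ̄ᵀ)⁻¹ = H⁺ + (1 + γ₁ᵀ H⁺ γ₁) γ₀ γ₀ᵀ − γ₀ γ₁ᵀ H⁺ − H⁺ γ₁ γ₀ᵀ, where H⁺ is the Moore–Penrose inverse of H. In particular (H + γ̄ γ̄ᵀ)⁻¹ γ̄ = γ₀. -/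
open Matrix

lemma aux_mul_vecMulVec {n : ℕ} (A : Matrix (Fin n) (Fin n) ℝ) (u v : Fin n → ℝ) :
    A * vecMulVec u v = vecMulVec (A.mulVec u) v := by
  ext i j
  simp [mul_apply, vecMulVec_apply, mulVec, dotProduct, Finset.sum_mul, mul_assoc]

lemma aux_vecMulVec_mul {n : ℕ} (u v : Fin n → ℝ) (A : Matrix (Fin n) (Fin n) ℝ) :
    vecMulVec u v * A = vecMulVec u (A.vecMul v) := by
  ext i j
  simp [mul_apply, vecMulVec_apply, vecMul, dotProduct, Finset.mul_sum, mul_assoc]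

lemma aux_vecMulVec_mulVec {n : ℕ} (u v w : Fin n → ℝ) :
    (vecMulVec u v).mulVec w = (v ⬝ᵥ w) • u := by
  ext i
  simp only [mulVec, vecMulVec_apply, dotProduct, Pi.smul_apply, smul_eq_mul, Finset.sum_mul]
  exact Finset.sum_congr rfl fun k _ => by ring

lemma aux_vecMulVec_mul_vecMulVec {n : ℕ} (u v w x : Fin n → ℝ) :
    vecMulVec u v * vecMulVec w x = (v ⬝ᵥ w) • vecMulVec u x := by
  ext i j
  simp [mul_apply, vecMulVec_apply, dotProduct, Finset.sum_mul, Finset.mul_sum]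
  ring_nf
  apply Finset.sum_congr rfl
  intro k _
  ring

lemma aux_vecMulVec_add_right {n : ℕ} (u v w : Fin n → ℝ) :
    vecMulVec u (v + w) = vecMulVec u v + vecMulVec u w := by
  ext i j; simp [vecMulVec_apply, mul_add]

lemma aux_vecMulVec_add_left {n : ℕ} (u v w : Fin n → ℝ) :
    vecMulVec (u + v) w = vecMulVec u w + vecMulVec v w := by
  ext i j; simp [vecMulVec_apply, add_mul]

lemma aux_vecMulVec_zero_right {n : ℕ} (u : Fin n → ℝ) :
    vecMulVec u (0 : Fin n → ℝ) = 0 := by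
  ext i j; simp [vecMulVec_apply]

lemma aux_vecMulVec_zero_left {n : ℕ} (u : Fin n → ℝ) :
    vecMulVec (0 : Fin n → ℝ) u = 0 := by
  ext i j; simp [vecMulVec_apply]

/-- rank-one update inverse formula for a rank-deficient PSD
matrix.  Here `Hp` plays the role of the Moore–Penrose inverse `H⁺`,
characterized by `H⁺H = HH⁺ = I − γ₀γ₀ᵀ` and `H⁺γ₀ = 0`. -/
theorem rank_deficient_woodbury {n : ℕ}
    (H Hp : Matrix (Fin n) (Fin n) ℝ) (γ₀ γ₁ : Fin n → ℝ)
    (hH : H.PosSemidef) (hrank : H.rank = n - 1)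
    (hker : H.mulVec γ₀ = 0) (hunit : γ₀ ⬝ᵥ γ₀ = 1) (horth : γ₀ ⬝ᵥ γ₁ = 0)
    (hHp1 : Hp * H = 1 - vecMulVec γ₀ γ₀)
    (hHp2 : H * Hp = 1 - vecMulVec γ₀ γ₀)
    (hHp0 : Hp.mulVec γ₀ = 0) :
    IsUnit (H + vecMulVec (γ₀ + γ₁) (γ₀ + γ₁)).det
    ∧ (H + vecMulVec (γ₀ + γ₁) (γ₀ + γ₁))⁻¹ =
        Hp + (1 + γ₁ ⬝ᵥ Hp.mulVec γ₁) • vecMulVec γ₀ γ₀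
          - vecMulVec γ₀ γ₁ * Hp - Hp * vecMulVec γ₁ γ₀
    ∧ (H + vecMulVec (γ₀ + γ₁) (γ₀ + γ₁))⁻¹.mulVec (γ₀ + γ₁) = γ₀ := by
  set A := H + vecMulVec (γ₀ + γ₁) (γ₀ + γ₁) with hA
  set B := Hp + (1 + γ₁ ⬝ᵥ Hp.mulVec γ₁) • vecMulVec γ₀ γ₀
          - vecMulVec γ₀ γ₁ * Hp - Hp * vecMulVec γ₁ γ₀ with hB
  have hHsymm : Hᵀ = H := hH.1
  have hvMγ₀ : H.vecMul γ₀ = 0 := by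
    rw [← mulVec_transpose, hHsymm, hker]
  have horth' : γ₁ ⬝ᵥ γ₀ = 0 := by rwa [dotProduct_comm] at horth
  -- key: B * A = 1
  have hBA : B * A = 1 := by
    rw [hB, hA]
    simp only [sub_mul, add_mul, mul_add]
    rw [hHp1]
    rw [aux_mul_vecMulVec Hp (γ₀ + γ₁) (γ₀ + γ₁), mulVec_add, hHp0, zero_add]
    rw [smul_mul_assoc, aux_vecMulVec_mul γ₀ γ₀ H, hvMγ₀, aux_vecMulVec_zero_right, smul_zero]
    rw [smul_mul_assoc, aux_vecMulVec_mul_vecMulVec]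
    rw [mul_assoc (vecMulVec γ₀ γ₁) Hp H, hHp1, mul_sub, mul_one,
      aux_vecMulVec_mul_vecMulVec, horth', zero_smul, sub_zero]
    rw [aux_mul_vecMulVec Hp γ₁ γ₀]
    rw [aux_vecMulVec_mul (Hp.mulVec γ₁) γ₀ H, hvMγ₀, aux_vecMulVec_zero_right]
    rw [mul_assoc (vecMulVec γ₀ γ₁) Hp _,
      aux_mul_vecMulVec Hp (γ₀ + γ₁) (γ₀ + γ₁), mulVec_add, hHp0, zero_add]
    rw [aux_vecMulVec_mul_vecMulVec γ₀ γ₁ (Hp.mulVec γ₁) (γ₀ + γ₁)]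
    rw [aux_vecMulVec_mul_vecMulVec (Hp.mulVec γ₁) γ₀ (γ₀ + γ₁) (γ₀ + γ₁)]
    have h1 : (γ₀ + γ₁) ⬝ᵥ γ₀ = 1 := by simp [add_dotProduct, hunit, horth']
    have h2 : γ₀ ⬝ᵥ (γ₀ + γ₁) = 1 := by simp [dotProduct_add, hunit, horth]
    rw [h2]
    have h3 : vecMulVec γ₀ (γ₀ + γ₁) = vecMulVec γ₀ γ₀ + vecMulVec γ₀ γ₁ :=
      aux_vecMulVec_add_right _ _ _
    simp only [one_smul, smul_zero, h3, smul_add, zero_smul, zero_sub, zero_add]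
    module
  have hdet : IsUnit A.det := Matrix.isUnit_det_of_left_inverse hBA
  have hinv : A⁻¹ = B := Matrix.inv_eq_left_inv hBA
  have hAB : A⁻¹ * A = 1 := by rw [hinv]; exact hBA
  refine ⟨hdet, hinv, ?_⟩
  have hAγ₀ : A.mulVec γ₀ = γ₀ + γ₁ := by
    rw [hA, add_mulVec, hker, zero_add, aux_vecMulVec_mulVec]
    simp [add_dotProduct, hunit, horth']
  calc A⁻¹.mulVec (γ₀ + γ₁) = A⁻¹.mulVec (A.mulVec γ₀) := by rw [hAγ₀]
    _ = (A⁻¹ * A).mulVec γ₀ := by rw [mulVec_mulVec]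
    _ = γ₀ := by rw [hAB, one_mulVec]
end

section
/- Let H₁ and H₂ be symmetric positive semi-definite n×n matrices with H₁ ⪰ H₂ (H₁ − H₂ PSD), both of rank n−1 with the same kernel spanned by a unit vector γ₀, and let γ₁ ⊥ γ₀, γ̄ = γ₀ + γ₁. Then (H₁ + γ̄γ̄ᵀ)⁻¹ − γ₀γ₀ᵀ ⪯ (H₂ + γ̄γ̄ᵀ)⁻¹ − γ₀γ₀ᵀ; that is, the asymptotic covariance based on the larger information matrix is smaller in the Loewner order. -/
/-! Since `γ̄ ⬝ᵥ γ₀ = 1`, the rank-one term `γ̄γ̄ᵀ` is positive on the common kernel `ℝ γ₀`, so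
`H₂ + γ̄γ̄ᵀ` is positive definite, and so is `H₁ + γ̄γ̄ᵀ ⪰ H₂ + γ̄γ̄ᵀ`. The `γ₀γ₀ᵀ` terms cancel and
the claim is antitonicity of inversion, which follows from the identity
`B⁻¹ - A⁻¹ = A⁻¹DA⁻¹ + (A⁻¹D)B⁻¹(A⁻¹D)ᴴ` for `D = A - B`. -/

open Matrix
open scoped ComplexOrder

namespace Matrix

variable {m 𝕜 : Type*} [Fintype m] [RCLike 𝕜]

theorem ker_mulVecLin_eq_span_singleton {K : Type*} [Field K] (H : Matrix m m K) {v : m → K}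
    (hr : H.rank = Fintype.card m - 1) (hv : H *ᵥ v = 0) (hv₀ : v ≠ 0) :
    LinearMap.ker H.mulVecLin = K ∙ v := by
  have hdim : H.rank + Module.finrank K (LinearMap.ker H.mulVecLin) = Fintype.card m := by
    rw [rank, LinearMap.finrank_range_add_finrank_ker, Module.finrank_fintype_fun_eq_card]
  refine (Submodule.eq_of_le_of_finrank_le ?_ ?_).symm
  · exact (Submodule.span_singleton_le_iff_mem _ _).mpr hv
  · rw [finrank_span_singleton hv₀]
    omega

theorem star_dotProduct_vecMulVec_mulVec (u x : m → 𝕜) :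
    star x ⬝ᵥ vecMulVec u (star u) *ᵥ x = ((‖star u ⬝ᵥ x‖ ^ 2 : ℝ) : 𝕜) := by
  rw [vecMulVec_mulVec, op_smul_eq_smul, dotProduct_smul,
    star_dotProduct, smul_eq_mul, RCLike.star_def, RCLike.conj_mul, RCLike.norm_conj]
  norm_cast

theorem PosSemidef.posDef_add_vecMulVec {H : Matrix m m 𝕜} (hH : H.PosSemidef) {u v : m → 𝕜}
    (hker : LinearMap.ker H.mulVecLin ≤ 𝕜 ∙ v) (huv : star u ⬝ᵥ v ≠ 0) :
    (H + vecMulVec u (star u)).PosDef := by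
  have hrank_one : (vecMulVec u (star u)).PosSemidef := posSemidef_vecMulVec_self_star u
  refine PosDef.of_dotProduct_mulVec_pos (hH.isHermitian.add hrank_one.isHermitian)
    fun x hx ↦ ?_
  rw [add_mulVec, dotProduct_add]
  refine lt_of_le_of_ne (add_nonneg (hH.dotProduct_mulVec_nonneg x)
    (hrank_one.dotProduct_mulVec_nonneg x)) fun h ↦ hx ?_
  have hHx := (add_eq_zero_iff_of_nonneg (hH.dotProduct_mulVec_nonneg x)
    (hrank_one.dotProduct_mulVec_nonneg x)).mp h.symm
  rw [star_dotProduct_vecMulVec_mulVec] at hHx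
  obtain ⟨c, rfl⟩ := Submodule.mem_span_singleton.mp <|
    hker ((hH.dotProduct_mulVec_zero_iff x).mp hHx.1)
  have hc : c * (star u ⬝ᵥ v) = 0 := by simpa using hHx.2
  simp [(mul_eq_zero.mp hc).resolve_right huv]

theorem PosDef.posSemidef_inv_sub_inv [DecidableEq m] {A B : Matrix m m 𝕜} (hB : B.PosDef)
    (hAB : (A - B).PosSemidef) : (B⁻¹ - A⁻¹).PosSemidef := by
  have hA : A.PosDef := by simpa using hB.add_posSemidef hAB
  have hAu := (isUnit_iff_isUnit_det A).mp hA.isUnit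
  have hBu := (isUnit_iff_isUnit_det B).mp hB.isUnit
  set D := A - B
  have hleft : A⁻¹ * D * B⁻¹ = B⁻¹ - A⁻¹ := by
    simp only [D, Matrix.mul_sub, Matrix.sub_mul, nonsing_inv_mul _ hAu, Matrix.one_mul,
      Matrix.mul_assoc, mul_nonsing_inv _ hBu, Matrix.mul_one]
  have hright : B⁻¹ * D * A⁻¹ = B⁻¹ - A⁻¹ := by
    simp only [D, Matrix.mul_sub, Matrix.sub_mul, nonsing_inv_mul _ hBu, Matrix.one_mul,
      Matrix.mul_assoc, mul_nonsing_inv _ hAu, Matrix.mul_one]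
  have key : B⁻¹ - A⁻¹ = A⁻¹ * D * A⁻¹ + (A⁻¹ * D) * B⁻¹ * (A⁻¹ * D)ᴴ := by
    calc B⁻¹ - A⁻¹ = A⁻¹ * D * (A⁻¹ + (B⁻¹ - A⁻¹)) := by rw [add_sub_cancel, hleft]
      _ = _ := by
        rw [conjTranspose_mul, hAB.isHermitian.eq, hA.isHermitian.inv.eq, ← hright]
        noncomm_ring
  rw [key]
  have h1 := hAB.mul_mul_conjTranspose_same A⁻¹
  rw [hA.isHermitian.inv.eq] at h1
  exact h1.add (hB.inv.posSemidef.mul_mul_conjTranspose_same _)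

end Matrix

theorem loewner_order_of_inverses_general {n : ℕ}
    (H₁ H₂ : Matrix (Fin n) (Fin n) ℝ) (γ₀ γ₁ : Fin n → ℝ)
    (hH₂ : H₂.PosSemidef)
    (hord : (H₁ - H₂).PosSemidef)
    (hr₂ : H₂.rank = n - 1)
    (hk₂ : H₂.mulVec γ₀ = 0)
    (hunit : γ₀ ⬝ᵥ γ₀ = 1) (horth : γ₀ ⬝ᵥ γ₁ = 0) :
    (((H₂ + vecMulVec (γ₀ + γ₁) (γ₀ + γ₁))⁻¹ - vecMulVec γ₀ γ₀)
      - ((H₁ + vecMulVec (γ₀ + γ₁) (γ₀ + γ₁))⁻¹ - vecMulVec γ₀ γ₀)).PosSemidef := by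
  have hγ₀ : γ₀ ≠ 0 := by
    rintro rfl
    simp at hunit
  have hker : LinearMap.ker H₂.mulVecLin = ℝ ∙ γ₀ :=
    ker_mulVecLin_eq_span_singleton H₂ (by simpa using hr₂) hk₂ hγ₀
  have hdot : star (γ₀ + γ₁) ⬝ᵥ γ₀ ≠ 0 := by
    simp [add_dotProduct, dotProduct_comm γ₁, hunit, horth]
  have hpd : (H₂ + vecMulVec (γ₀ + γ₁) (γ₀ + γ₁)).PosDef := by
    simpa using hH₂.posDef_add_vecMulVec hker.le hdot
  rw [sub_sub_sub_cancel_right]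
  exact hpd.posSemidef_inv_sub_inv (by rwa [add_sub_add_right_eq_sub])

/-- if `H₁ ⪰ H₂` are symmetric PSD of rank `n−1` with common
kernel spanned by the unit vector `γ₀`, `γ₁ ⊥ γ₀`, `γ̄ = γ₀ + γ₁`, then
`(H₁+γ̄γ̄ᵀ)⁻¹ − γ₀γ₀ᵀ ⪯ (H₂+γ̄γ̄ᵀ)⁻¹ − γ₀γ₀ᵀ` in the Loewner order. -/
theorem loewner_order_of_inverses {n : ℕ}
    (H₁ H₂ : Matrix (Fin n) (Fin n) ℝ) (γ₀ γ₁ : Fin n → ℝ)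
    (hH₁ : H₁.PosSemidef) (hH₂ : H₂.PosSemidef)
    (hord : (H₁ - H₂).PosSemidef)
    (hr₁ : H₁.rank = n - 1) (hr₂ : H₂.rank = n - 1)
    (hk₁ : H₁.mulVec γ₀ = 0) (hk₂ : H₂.mulVec γ₀ = 0)
    (hunit : γ₀ ⬝ᵥ γ₀ = 1) (horth : γ₀ ⬝ᵥ γ₁ = 0) :
    (((H₂ + vecMulVec (γ₀ + γ₁) (γ₀ + γ₁))⁻¹ - vecMulVec γ₀ γ₀)
      - ((H₁ + vecMulVec (γ₀ + γ₁) (γ₀ + γ₁))⁻¹ - vecMulVec γ₀ γ₀)).PosSemidef :=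
  loewner_order_of_inverses_general H₁ H₂ γ₀ γ₁ hH₂ hord hr₂ hk₂ hunit horth
end
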